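/- Let τ be a finite unordered rooted tree, v a vertex of τ, and let θ be the tree obtained from τ by adding a new vertex w as a child of v and making the vertices of a subset C of the children of v become children of w. The induced mapping M_{τ→θ}, associating each vertex of τ with itself in θ, is a constrained mapping in the sense of Zhang if and only if C is empty, C has exactly one element, or C equals the whole set of children of v. -/

import Mathlib

/-!
The identity preserves the ancestor relation between the vertices of `t`, so the least
common ancestor of two of them is the same in `t` and `θ`, unless it is the new vertex `w`
in `θ`. That happens exactly when they lie below two distinct vertices of `C`, and then the
least common ancestor in `t` is `v`. Zhang's condition asks in that case that the proper
descendants of `v` in `t` be those of `w` in `θ`, i.e. that every child of `v` lie in `C`.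
-/

/-- A finite rooted tree whose vertices form a finite subset `supp` of `ℕ`.
`par` maps each vertex to its parent; the root is a fixed point of `par`
(so it has no parent), and every vertex reaches the root by iterating `par`
(connectedness / acyclicity). -/
structure FTree where
  supp : Finset ℕ
  root : ℕ
  root_mem : root ∈ supp
  par : ℕ → ℕ
  par_mem : ∀ v ∈ supp, par v ∈ supp
  par_root : par root = root
  reach : ∀ v ∈ supp, ∃ n, par^[n] v = root

namespace FTree

/-- Depth of a vertex: least number of parent steps needed to reach the root. -/
noncomputable def depth (t : FTree) (v : ℕ) : ℕ :=
  if h : v ∈ t.supp then Nat.find (t.reach v h) else 0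

/-- `w` is a (weak) descendant of `v` in `t`. -/
def IsDesc (t : FTree) (v w : ℕ) : Prop :=
  w ∈ t.supp ∧ ∃ n ≤ t.depth w, t.par^[n] w = v

open Classical in
/-- Vertex set of the subtree `t[v]` rooted at `v`. -/
noncomputable def desc (t : FTree) (v : ℕ) : Finset ℕ :=
  t.supp.filter (fun w => t.IsDesc v w)

/-- Height of the subtree `t[v]` rooted at `v`. -/
noncomputable def heightAt (t : FTree) (v : ℕ) : ℕ :=
  (t.desc v).sup (fun w => t.depth w) - t.depth v

/-- Height of the tree. -/
noncomputable def height (t : FTree) : ℕ := t.heightAt t.root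

/-- The set of children of `v` in `t`. -/
def children (t : FTree) (v : ℕ) : Finset ℕ :=
  t.supp.filter (fun w => t.par w = v ∧ w ≠ t.root)

open Classical in
/-- `γ_h(v)`: number of children of `v` whose subtree has height `h`. -/
noncomputable def gam (t : FTree) (v h : ℕ) : ℕ :=
  ((t.children v).filter (fun c => t.heightAt c = h)).card

/-- The subtree of `t` rooted at `v` is isomorphic (as an unordered rooted tree)
to the subtree of `s` rooted at `w`: a bijection between the vertex sets sending
root to root and commuting with the parent maps (i.e. mapping edges to edges). -/
def SubtreeIso (t : FTree) (v : ℕ) (s : FTree) (w : ℕ) : Prop :=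
  ∃ φ : ℕ → ℕ, Set.BijOn φ (t.desc v : Set ℕ) (s.desc w : Set ℕ) ∧ φ v = w ∧
    ∀ x ∈ t.desc v, x ≠ v → φ (t.par x) = s.par (φ x)

/-- Isomorphism of rooted trees. -/
def TreeIso (t s : FTree) : Prop := SubtreeIso t t.root s s.root

/-- A tree is self-nested if any two of its subtrees of the same height
are isomorphic. -/
def SelfNested (t : FTree) : Prop :=
  ∀ v ∈ t.supp, ∀ w ∈ t.supp, t.heightAt v = t.heightAt w → SubtreeIso t v t w

open Classical in
/-- Height profile entry `ρ_t(h1,h2)`: the multiset (family up to permutation) of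
the values `γ_{h2}(v)` over all vertices `v` of `t` with `H(t[v]) = h1`. -/
noncomputable def profile (t : FTree) (h1 h2 : ℕ) : Multiset ℕ :=
  (t.supp.filter (fun v => t.heightAt v = h1)).val.map (fun v => t.gam v h2)

/-- Number of vertices of `t`. -/
def numV (t : FTree) : ℕ := t.supp.card

/-- `a` is a (weak) ancestor of `b`. -/
def IsAnc (t : FTree) (a b : ℕ) : Prop := ∃ n, t.par^[n] b = a

/-- `a` is a proper ancestor of `b`. -/
def ProperAnc (t : FTree) (a b : ℕ) : Prop := a ≠ b ∧ t.IsAnc a b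

/-- `l` is the least common ancestor of `a` and `b`. -/
def IsLCA (t : FTree) (a b l : ℕ) : Prop :=
  l ∈ t.supp ∧ t.IsAnc l a ∧ t.IsAnc l b ∧
    ∀ m ∈ t.supp, t.IsAnc m a → t.IsAnc m b → t.IsAnc m l

/-- `φ`, restricted to the domain `D ⊆ t.supp`, is a constrained mapping in the
sense of Zhang from `t` to `s`: a one-to-one correspondence preserving the
ancestor order, satisfying moreover Zhang's condition on least common ancestors. -/
def ZhangMapping (t s : FTree) (D : Finset ℕ) (φ : ℕ → ℕ) : Prop :=
  D ⊆ t.supp ∧ (∀ x ∈ D, φ x ∈ s.supp) ∧ Set.InjOn φ (D : Set ℕ) ∧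
  (∀ a ∈ D, ∀ b ∈ D, (t.ProperAnc a b ↔ s.ProperAnc (φ a) (φ b))) ∧
  (∀ v1 ∈ D, ∀ v2 ∈ D, ∀ v3 ∈ D, ∀ l l',
    t.IsLCA v1 v2 l → s.IsLCA (φ v1) (φ v2) l' →
    (t.ProperAnc l v3 ↔ s.ProperAnc l' (φ v3)))

/-- Allowed inserting operation (AI): adding a new internal vertex `w` as a child of
`v`, making `w` the parent of the child `c` of `v`; allowed only if
`H(t[c]) + 1 < H(t[v])`. -/
def InsertAI (t θ : FTree) : Prop :=
  ∃ v c w, v ∈ t.supp ∧ c ∈ t.children v ∧ w ∉ t.supp ∧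
    t.heightAt c + 1 < t.heightAt v ∧
    θ.supp = insert w t.supp ∧ θ.root = t.root ∧
    θ.par w = v ∧ θ.par c = w ∧ ∀ x ∈ t.supp, x ≠ c → θ.par x = t.par x

/-- Allowed inserting operation (AS): attaching a tree `s` as a new child subtree of
`v`; allowed only if `H(s) + 1 ≤ H(t[v])`. -/
def InsertAS (t θ : FTree) : Prop :=
  ∃ (v : ℕ) (s : FTree), v ∈ t.supp ∧ Disjoint s.supp t.supp ∧
    s.height + 1 ≤ t.heightAt v ∧
    θ.supp = t.supp ∪ s.supp ∧ θ.root = t.root ∧ θ.par s.root = v ∧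
    (∀ x ∈ t.supp, θ.par x = t.par x) ∧ (∀ x ∈ s.supp, x ≠ s.root → θ.par x = s.par x)

/-- One allowed inserting operation. -/
def InsertStep (t θ : FTree) : Prop := InsertAI t θ ∨ InsertAS t θ

/-- Allowed deleting operation (DI): deleting an internal vertex `v`, child of `u`,
having a unique child `c` (which becomes a child of `u`); allowed only if `u` has
another child `v'` with `H(t[v']) ≥ H(t[v])`. -/
def DeleteDI (t θ : FTree) : Prop :=
  ∃ u v c, v ∈ t.children u ∧ t.children v = {c} ∧
    (∃ v' ∈ t.children u, v' ≠ v ∧ t.heightAt v ≤ t.heightAt v') ∧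
    θ.supp = t.supp.erase v ∧ θ.root = t.root ∧ θ.par c = u ∧
    ∀ x ∈ t.supp, x ≠ v → x ≠ c → θ.par x = t.par x

/-- Allowed deleting operation (DS): deleting the whole subtree rooted at a child `w`
of `v`; allowed only if `v` has another child `w'` with `H(t[w']) + 1 = H(t[v])`. -/
def DeleteDS (t θ : FTree) : Prop :=
  ∃ v w, w ∈ t.children v ∧
    (∃ w' ∈ t.children v, w' ≠ w ∧ t.heightAt w' + 1 = t.heightAt v) ∧
    θ.supp = t.supp \ t.desc w ∧ θ.root = t.root ∧
    ∀ x ∈ θ.supp, θ.par x = t.par x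

/-- One allowed deleting operation. -/
def DeleteStep (t θ : FTree) : Prop := DeleteDI t θ ∨ DeleteDS t θ

/-- A general single-vertex inserting operation: a new vertex `w` is added as a child
of `v`, and the vertices of a subset `C` of the children of `v` become children of `w`. -/
def GeneralInsert (t θ : FTree) : Prop :=
  ∃ (v w : ℕ) (C : Finset ℕ), v ∈ t.supp ∧ w ∉ t.supp ∧ C ⊆ t.children v ∧
    θ.supp = insert w t.supp ∧ θ.root = t.root ∧ θ.par w = v ∧
    (∀ x ∈ C, θ.par x = w) ∧ ∀ x ∈ t.supp, x ∉ C → θ.par x = t.par x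

/-- Cost of a constrained mapping with domain `D`: vertices of `t` not in the domain
are deleted, vertices of `s` not in the image are inserted (unit costs). -/
def mappingCost (t s : FTree) (D : Finset ℕ) (φ : ℕ → ℕ) : ℕ :=
  (t.numV - D.card) + (s.numV - (D.image φ).card)

/-- Zhang's constrained edit distance between unordered trees: the minimal cost
associated with a constrained mapping between `t` and `s`. -/
noncomputable def DZ (t s : FTree) : ℕ :=
  sInf { c | ∃ (D : Finset ℕ) (φ : ℕ → ℕ), ZhangMapping t s D φ ∧ c = mappingCost t s D φ }

end FTree

namespace FTree

variable {t : FTree} {a b c l p x y : ℕ}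

theorem iterate_par_mem (hx : x ∈ t.supp) (n : ℕ) : t.par^[n] x ∈ t.supp := by
  induction n with
  | zero => exact hx
  | succ n ih => rw [Function.iterate_succ_apply']; exact t.par_mem _ ih

theorem eq_root_of_par_eq_self (hx : x ∈ t.supp) (h : t.par x = x) : x = t.root := by
  obtain ⟨n, hn⟩ := t.reach x hx
  rwa [Function.iterate_fixed h] at hn

theorem IsAnc.refl (t : FTree) (x : ℕ) : t.IsAnc x x := ⟨0, rfl⟩

theorem isAnc_par (t : FTree) (x : ℕ) : t.IsAnc (t.par x) x := ⟨1, rfl⟩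

theorem IsAnc.trans (hab : t.IsAnc a b) (hbc : t.IsAnc b c) : t.IsAnc a c := by
  obtain ⟨m, hm⟩ := hab
  obtain ⟨n, hn⟩ := hbc
  exact ⟨m + n, by rw [Function.iterate_add_apply, hn, hm]⟩

theorem IsAnc.of_par (h : t.IsAnc a (t.par x)) : t.IsAnc a x := h.trans (t.isAnc_par x)

theorem IsAnc.par_of_ne (h : t.IsAnc a x) (hne : a ≠ x) : t.IsAnc a (t.par x) := by
  obtain ⟨_ | n, hn⟩ := h
  · exact absurd hn.symm hne
  · exact ⟨n, by rwa [Function.iterate_succ_apply] at hn⟩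

/-- `x` lies on a cycle of `par` and reaches the fixed point `root`, so it is the root. -/
theorem IsAnc.antisymm (hx : x ∈ t.supp) (hxy : t.IsAnc x y) (hyx : t.IsAnc y x) :
    x = y := by
  obtain ⟨m, hm⟩ := hxy
  obtain ⟨n, hn⟩ := hyx
  rcases Nat.eq_zero_or_pos (m + n) with hmn | hmn
  · rw [← hm, show m = 0 by omega]; rfl
  have hper : Function.IsPeriodicPt t.par (m + n) x := by
    show t.par^[m + n] x = x
    rw [Function.iterate_add_apply, hn, hm]
  obtain ⟨k, hk⟩ := t.reach x hx
  have hroot : x = t.root := by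
    rw [← (hper.mul_const k).eq, ← Nat.sub_add_cancel (Nat.le_mul_of_pos_left k hmn),
      Function.iterate_add_apply, hk, Function.iterate_fixed t.par_root]
  rw [← hn, hroot, Function.iterate_fixed t.par_root]

theorem IsLCA.unique (hl : t.IsLCA a b l) (hp : t.IsLCA a b p) : l = p :=
  IsAnc.antisymm hl.1 (hp.2.2.2 l hl.1 hl.2.1 hl.2.2.1) (hl.2.2.2 p hp.1 hp.2.1 hp.2.2.1)

theorem isLCA_of_par_eq (hp : p ∈ t.supp) (ha : t.par a = p) (hb : t.par b = p)
    (hab : a ≠ b) : t.IsLCA a b p := by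
  refine ⟨hp, ha ▸ t.isAnc_par a, hb ▸ t.isAnc_par b, fun m _ hma hmb => ?_⟩
  by_cases hm : m = a
  · subst hm
    exact hb ▸ hmb.par_of_ne hab
  · exact ha ▸ hma.par_of_ne hm

theorem mem_children : c ∈ t.children p ↔ c ∈ t.supp ∧ t.par c = p ∧ c ≠ t.root :=
  Finset.mem_filter

theorem not_isAnc_of_mem_children (hc : c ∈ t.children p) : ¬ t.IsAnc c p := by
  obtain ⟨hcs, hcp, hcr⟩ := mem_children.mp hc
  intro h
  have hcp' : c = p := IsAnc.antisymm hcs h (hcp ▸ t.isAnc_par c)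
  exact hcr (eq_root_of_par_eq_self hcs (hcp.trans hcp'.symm))

theorem eq_of_mem_children_of_isAnc (hc : c ∈ t.children p) (hx : x ∈ t.children p)
    (h : t.IsAnc c x) : c = x := by
  by_contra hne
  exact not_isAnc_of_mem_children hc ((mem_children.mp hx).2.1 ▸ h.par_of_ne hne)

theorem properAnc_iff_exists_mem_children (hx : x ∈ t.supp) :
    t.ProperAnc p x ↔ ∃ c ∈ t.children p, t.IsAnc c x := by
  constructor
  · rintro ⟨hne, n, hn⟩
    induction n generalizing x with
    | zero => exact absurd hn.symm hne
    | succ n ih =>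
      rw [Function.iterate_succ_apply] at hn
      by_cases hpx : t.par x = p
      · refine ⟨x, mem_children.mpr ⟨hx, hpx, fun hxr => hne ?_⟩, IsAnc.refl t x⟩
        rw [← hpx, hxr, t.par_root]
      · obtain ⟨c, hc, hcx⟩ := ih (t.par_mem x hx) (Ne.symm hpx) hn
        exact ⟨c, hc, hcx.of_par⟩
  · rintro ⟨c, hc, hcx⟩
    have hpc : t.IsAnc p c := (mem_children.mp hc).2.1 ▸ t.isAnc_par c
    exact ⟨fun hpx => not_isAnc_of_mem_children hc (hpx ▸ hcx), hpc.trans hcx⟩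

structure IsInsertion (t θ : FTree) (v w : ℕ) (C : Finset ℕ) : Prop where
  mem : v ∈ t.supp
  new_not_mem : w ∉ t.supp
  subset_children : C ⊆ t.children v
  supp_eq : θ.supp = insert w t.supp
  par_new : θ.par w = v
  par_of_mem : ∀ x ∈ C, θ.par x = w
  par_of_not_mem : ∀ x ∈ t.supp, x ∉ C → θ.par x = t.par x

namespace IsInsertion

variable {t θ : FTree} {v w : ℕ} {C : Finset ℕ} {a b l x : ℕ}

theorem mem_supp (h : IsInsertion t θ v w C) (hx : x ∈ t.supp) : x ∈ θ.supp := by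
  rw [h.supp_eq]; exact Finset.mem_insert_of_mem hx

theorem ne_new (h : IsInsertion t θ v w C) (hx : x ∈ t.supp) : x ≠ w :=
  fun hxw => h.new_not_mem (hxw ▸ hx)

theorem par_of_mem_children (h : IsInsertion t θ v w C) (hx : x ∈ C) : t.par x = v :=
  (mem_children.mp (h.subset_children hx)).2.1

theorem isAnc_par (h : IsInsertion t θ v w C) (hx : x ∈ t.supp) : θ.IsAnc (t.par x) x := by
  by_cases hxC : x ∈ C
  · exact ⟨2, by simp [h.par_of_mem x hxC, h.par_new, h.par_of_mem_children hxC]⟩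
  · exact h.par_of_not_mem x hx hxC ▸ θ.isAnc_par x

theorem isAnc_of_isAnc (h : IsInsertion t θ v w C) (hx : x ∈ t.supp) (hax : t.IsAnc a x) :
    θ.IsAnc a x := by
  obtain ⟨n, rfl⟩ := hax
  induction n with
  | zero => exact IsAnc.refl θ x
  | succ n ih =>
    rw [Function.iterate_succ_apply']
    exact (h.isAnc_par (iterate_par_mem hx n)).trans ih

/-- In `θ` the path from `x` to `a` climbs the tree `t` edge by edge, except that the
edge from a vertex of `C` to `v` takes two steps through `w`. -/
theorem isAnc_iff (h : IsInsertion t θ v w C) (ha : a ∈ t.supp) (hx : x ∈ t.supp) :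
    θ.IsAnc a x ↔ t.IsAnc a x := by
  refine ⟨fun hax => ?_, h.isAnc_of_isAnc hx⟩
  obtain ⟨n, hn⟩ := hax
  induction n using Nat.strong_induction_on generalizing x with
  | _ n ih =>
    obtain _ | n := n
    · exact ⟨0, hn⟩
    suffices ∃ m < n + 1, θ.par^[m] (t.par x) = a by
      obtain ⟨m, hm, hma⟩ := this
      exact (ih m hm (t.par_mem x hx) hma).of_par
    rw [Function.iterate_succ_apply] at hn
    by_cases hxC : x ∈ C
    · rw [h.par_of_mem x hxC] at hn
      obtain _ | n := n
      · exact absurd hn (h.ne_new ha).symm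
      · rw [Function.iterate_succ_apply, h.par_new] at hn
        exact ⟨n, by omega, h.par_of_mem_children hxC ▸ hn⟩
    · exact ⟨n, by omega, h.par_of_not_mem x hx hxC ▸ hn⟩

theorem properAnc_iff (h : IsInsertion t θ v w C) (ha : a ∈ t.supp) (hx : x ∈ t.supp) :
    θ.ProperAnc a x ↔ t.ProperAnc a x :=
  and_congr_right fun _ => h.isAnc_iff ha hx

theorem isAnc_new_iff (h : IsInsertion t θ v w C) (hx : x ∈ t.supp) :
    θ.IsAnc w x ↔ ∃ c ∈ C, t.IsAnc c x := by
  constructor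
  · rintro ⟨n, hn⟩
    induction n generalizing x with
    | zero => exact absurd hn (h.ne_new hx)
    | succ n ih =>
      rw [Function.iterate_succ_apply] at hn
      by_cases hxC : x ∈ C
      · exact ⟨x, hxC, IsAnc.refl t x⟩
      · rw [h.par_of_not_mem x hx hxC] at hn
        obtain ⟨c, hc, hcx⟩ := ih (t.par_mem x hx) hn
        exact ⟨c, hc, hcx.of_par⟩
  · rintro ⟨c, hc, hcx⟩
    exact (h.par_of_mem c hc ▸ θ.isAnc_par c).trans
      (h.isAnc_of_isAnc hx hcx)

theorem properAnc_new_iff (h : IsInsertion t θ v w C) (hx : x ∈ t.supp) :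
    θ.ProperAnc w x ↔ ∃ c ∈ C, t.IsAnc c x :=
  (and_iff_right (h.ne_new hx).symm).trans (h.isAnc_new_iff hx)

theorem isLCA_of_isLCA_insert (h : IsInsertion t θ v w C) (hl : l ∈ t.supp)
    (ha : a ∈ t.supp) (hb : b ∈ t.supp) (hθ : θ.IsLCA a b l) : t.IsLCA a b l := by
  obtain ⟨-, hla, hlb, hmax⟩ := hθ
  refine ⟨hl, (h.isAnc_iff hl ha).mp hla, (h.isAnc_iff hl hb).mp hlb, fun m hm hma hmb => ?_⟩
  exact (h.isAnc_iff hm hl).mp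
    (hmax m (h.mem_supp hm) (h.isAnc_of_isAnc ha hma) (h.isAnc_of_isAnc hb hmb))

theorem eq_of_isLCA_new (h : IsInsertion t θ v w C) (ha : a ∈ t.supp) (hb : b ∈ t.supp)
    (hl : t.IsLCA a b l) (hθ : θ.IsLCA a b w) : l = v := by
  have hva : ∀ x ∈ t.supp, θ.IsAnc w x → t.IsAnc v x := fun x hx hwx => by
    obtain ⟨c, hc, hcx⟩ := (h.isAnc_new_iff hx).mp hwx
    exact (h.par_of_mem_children hc ▸ t.isAnc_par c).trans hcx
  have hlw : θ.IsAnc l w :=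
    hθ.2.2.2 l (h.mem_supp hl.1) (h.isAnc_of_isAnc ha hl.2.1) (h.isAnc_of_isAnc hb hl.2.2.1)
  have hlv : t.IsAnc l v :=
    (h.isAnc_iff hl.1 h.mem).mp (h.par_new ▸ hlw.par_of_ne (h.ne_new hl.1))
  exact IsAnc.antisymm hl.1 hlv (hl.2.2.2 v h.mem (hva a ha hθ.2.1) (hva b hb hθ.2.2.1))

/-- Both vertices lie below the only vertex `c` of `C`, a common ancestor strictly below `w`. -/
theorem not_isLCA_new (h : IsInsertion t θ v w C) (hC : C.card ≤ 1) (ha : a ∈ t.supp)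
    (hb : b ∈ t.supp) : ¬ θ.IsLCA a b w := by
  intro hθ
  obtain ⟨c, hc, hca⟩ := (h.isAnc_new_iff ha).mp hθ.2.1
  obtain ⟨c', hc', hcb⟩ := (h.isAnc_new_iff hb).mp hθ.2.2.1
  obtain rfl := Finset.card_le_one.mp hC c hc c' hc'
  have hcs : c ∈ t.supp := (mem_children.mp (h.subset_children hc)).1
  have hcw : θ.IsAnc c w :=
    hθ.2.2.2 c (h.mem_supp hcs) (h.isAnc_of_isAnc ha hca) (h.isAnc_of_isAnc hb hcb)
  exact h.ne_new hcs
    (IsAnc.antisymm (h.mem_supp hcs) hcw (h.par_of_mem c hc ▸ θ.isAnc_par c))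

theorem properAnc_iff_of_isLCA (h : IsInsertion t θ v w C)
    (hcase : C.card ≤ 1 ∨ t.children v ⊆ C) {a b x l l' : ℕ} (ha : a ∈ t.supp)
    (hb : b ∈ t.supp) (hx : x ∈ t.supp) (hl : t.IsLCA a b l) (hl' : θ.IsLCA a b l') :
    t.ProperAnc l x ↔ θ.ProperAnc l' x := by
  have hl'mem : l' ∈ insert w t.supp := h.supp_eq ▸ hl'.1
  rcases Finset.mem_insert.mp hl'mem with rfl | hl's
  · rcases hcase with hC | hsub
    · exact absurd hl' (h.not_isLCA_new hC ha hb)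
    obtain rfl := h.eq_of_isLCA_new ha hb hl hl'
    rw [properAnc_iff_exists_mem_children hx, h.properAnc_new_iff hx,
      h.subset_children.antisymm hsub]
  · obtain rfl := hl.unique (h.isLCA_of_isLCA_insert hl's ha hb hl')
    exact (h.properAnc_iff hl.1 hx).symm

theorem zhangMapping (h : IsInsertion t θ v w C) (hcase : C.card ≤ 1 ∨ t.children v ⊆ C) :
    ZhangMapping t θ t.supp id :=
  ⟨subset_rfl, fun _ => h.mem_supp, Function.injective_id.injOn,
    fun _ ha _ hb => (h.properAnc_iff ha hb).symm,
    fun _ ha _ hb _ hx _ _ hl hl' => h.properAnc_iff_of_isLCA hcase ha hb hx hl hl'⟩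

theorem children_subset_of_zhangMapping (h : IsInsertion t θ v w C)
    (hZ : ZhangMapping t θ t.supp id) (hC : 1 < C.card) : t.children v ⊆ C := by
  intro c hc
  obtain ⟨c₁, hc₁, c₂, hc₂, hne⟩ := Finset.one_lt_card.mp hC
  have hlca : t.IsLCA c₁ c₂ v :=
    isLCA_of_par_eq h.mem (h.par_of_mem_children hc₁) (h.par_of_mem_children hc₂) hne
  have hlca' : θ.IsLCA c₁ c₂ w := isLCA_of_par_eq (h.supp_eq ▸ Finset.mem_insert_self w _)
    (h.par_of_mem c₁ hc₁) (h.par_of_mem c₂ hc₂) hne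
  have hcs : c ∈ t.supp := (mem_children.mp hc).1
  have hvc : t.ProperAnc v c :=
    (properAnc_iff_exists_mem_children hcs).mpr ⟨c, hc, IsAnc.refl t c⟩
  obtain ⟨c', hc', hc'c⟩ := (h.properAnc_new_iff hcs).mp
    ((hZ.2.2.2.2 c₁ (mem_children.mp (h.subset_children hc₁)).1
      c₂ (mem_children.mp (h.subset_children hc₂)).1 c hcs v w hlca hlca').mp hvc)
  exact eq_of_mem_children_of_isAnc (h.subset_children hc') hc hc'c ▸ hc'

end IsInsertion

end FTree

theorem zhangMapping_insert_iff_general (t θ : FTree) (v w : ℕ) (C : Finset ℕ)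
    (hv : v ∈ t.supp) (hw : w ∉ t.supp) (hC : C ⊆ t.children v)
    (hsupp : θ.supp = insert w t.supp)
    (hparw : θ.par w = v) (hparC : ∀ x ∈ C, θ.par x = w)
    (hpar : ∀ x ∈ t.supp, x ∉ C → θ.par x = t.par x) :
    FTree.ZhangMapping t θ t.supp id ↔
      (C = ∅ ∨ C.card = 1 ∨ C = t.children v) := by
  have h : FTree.IsInsertion t θ v w C := ⟨hv, hw, hC, hsupp, hparw, hparC, hpar⟩
  have hsmall : C = ∅ ∨ C.card = 1 ↔ C.card ≤ 1 := by
    rw [← Finset.card_eq_zero]; omega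
  rw [← or_assoc, hsmall, ← hC.ge_iff_eq]
  refine ⟨fun hZ => ?_, h.zhangMapping⟩
  by_cases hC1 : C.card ≤ 1
  · exact Or.inl hC1
  · exact Or.inr (h.children_subset_of_zhangMapping hZ (by omega))

/-- Let `θ` be obtained from `t` by adding a new vertex `w` as a child
of `v`, the vertices of the subset `C` of the children of `v` becoming children of `w`.
The induced mapping `M_{t→θ}` (each vertex of `t` is sent to itself in `θ`) is a
constrained mapping in the sense of Zhang if and only if `C` is empty, `C` has exactly
one element, or `C` is the whole set of children of `v`. -/
theorem zhangMapping_insert_iff (t θ : FTree) (v w : ℕ) (C : Finset ℕ)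
    (hv : v ∈ t.supp) (hw : w ∉ t.supp) (hC : C ⊆ t.children v)
    (hsupp : θ.supp = insert w t.supp) (hroot : θ.root = t.root)
    (hparw : θ.par w = v) (hparC : ∀ x ∈ C, θ.par x = w)
    (hpar : ∀ x ∈ t.supp, x ∉ C → θ.par x = t.par x) :
    FTree.ZhangMapping t θ t.supp id ↔
      (C = ∅ ∨ C.card = 1 ∨ C = t.children v) :=
  zhangMapping_insert_iff_general t θ v w C hv hw hC hsupp hparw hparC hpar
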